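/- arXiv:2406.10440 — 7 statements merged into one kernel-verified Lean document; each statement's English description precedes it below -/
import Mathlib

section
/- Let O be an order in an imaginary quadratic field K and let m > 2 be an integer coprime to the discriminant of O. Then the image of O under the norm map, reduced modulo m, is not contained in the set of squares in Z/mZ. -/
/-!
Since `N((a - t) + 2τ) = a² - Δ`, if every norm were a square mod `m` then the squares of
`ℤ/mℤ` would be closed under `y ↦ y - Δ`. Starting from `0`, every multiple of `Δ` would be a
square, and as `Δ` is a unit mod `m` every residue would be. But squaring on the finite ring
`ℤ/mℤ` identifies `1` and `-1`, so it cannot be surjective when `m > 2`.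
-/

/-- The norm form of the order `ℤ[τ]`, where `τ` has trace `t` and norm `n`:
`N(a + bτ) = a² + t·a·b + n·b²`. -/
def nrm (t n a b : ℤ) : ℤ := a ^ 2 + t * a * b + n * b ^ 2

theorem nrm_sub_two (t n a : ℤ) : nrm t n (a - t) 2 = a ^ 2 - (t ^ 2 - 4 * n) := by
  unfold nrm
  ring

section

variable {R : Type*} [Ring R]

theorem exists_not_isSquare_of_two_ne_zero [Finite R] (h2 : (2 : R) ≠ 0) :
    ∃ x : R, ¬ IsSquare x := by
  by_contra! hsq
  have hsurj : Function.Surjective (fun r : R ↦ r * r) := fun y ↦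
    (hsq y).imp fun r hr ↦ hr.symm
  have hneg : (-1 : R) = 1 := Finite.injective_iff_surjective.mpr hsurj (by simp)
  exact h2 (by rw [← one_add_one_eq_two]; nth_rewrite 1 [← hneg]; exact neg_add_cancel 1)

theorem isSquare_neg_natCast_mul {d : R} (hstep : ∀ y, IsSquare y → IsSquare (y - d)) (k : ℕ) :
    IsSquare (-(k : R) * d) := by
  induction k with
  | zero => simp
  | succ k ih => simpa [add_mul, sub_eq_add_neg, add_comm] using hstep _ ih

end

theorem ZMod.isSquare_of_forall_isSquare_sq_sub {m : ℕ} [NeZero m] {d : ZMod m} (hd : IsUnit d)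
    (h : ∀ x : ZMod m, IsSquare (x ^ 2 - d)) (y : ZMod m) : IsSquare y := by
  have hstep : ∀ z : ZMod m, IsSquare z → IsSquare (z - d) := by
    rintro z ⟨r, rfl⟩
    simpa [sq] using h r
  obtain ⟨u, rfl⟩ := hd
  have hy : -(((-y * ↑u⁻¹).val : ℕ) : ZMod m) * u = y := by
    rw [ZMod.natCast_zmod_val, neg_mul, mul_assoc, Units.inv_mul, mul_one, neg_neg]
  rw [← hy]
  exact isSquare_neg_natCast_mul hstep _

theorem norms_not_all_squares_general (t n : ℤ)
    (m : ℕ) (hm : 2 < m) (hcop : IsCoprime (m : ℤ) (t ^ 2 - 4 * n)) :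
    ¬ (∀ a b : ℤ, IsSquare ((nrm t n a b : ℤ) : ZMod m)) := by
  intro h
  have : NeZero m := ⟨by omega⟩
  have h2 : (2 : ZMod m) ≠ 0 := by
    intro h2
    have := Nat.le_of_dvd two_pos ((ZMod.natCast_eq_zero_iff 2 m).mp (by exact_mod_cast h2))
    omega
  obtain ⟨y, hy⟩ := exists_not_isSquare_of_two_ne_zero h2
  refine hy (ZMod.isSquare_of_forall_isSquare_sq_sub
    ((ZMod.coe_int_isUnit_iff_isCoprime _ m).mpr hcop) (fun x ↦ ?_) y)
  obtain ⟨a, rfl⟩ := ZMod.intCast_surjective x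
  simpa [nrm_sub_two] using h (a - t) 2

theorem norms_not_all_squares (t n : ℤ) (himag : t ^ 2 - 4 * n < 0)
    (m : ℕ) (hm : 2 < m) (hcop : IsCoprime (m : ℤ) (t ^ 2 - 4 * n)) :
    ¬ (∀ a b : ℤ, IsSquare ((nrm t n a b : ℤ) : ZMod m)) :=
  norms_not_all_squares_general t n m hm hcop
end

section
/- Let p be an odd prime that splits or is inert in an imaginary quadratic order O, and let m = p^k > 2 be a power of p. Then there exists λ ∈ O such that N(λ) mod m is not a square in Z/mZ. -/
theorem ZMod.isSquare_intCast_of_dvd {m p : ℕ} (hdvd : p ∣ m) {z : ℤ}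
    (h : IsSquare (z : ZMod m)) : IsSquare (z : ZMod p) := by
  simpa only [map_intCast] using h.map (ZMod.castHom hdvd (ZMod p))

theorem ZMod.exists_not_isSquare_sq_sub {p : ℕ} [Fact p.Prime] (hp2 : p ≠ 2) {d : ZMod p}
    (hd : d ≠ 0) : ∃ x : ZMod p, ¬ IsSquare (x ^ 2 - d) := by
  by_contra! hsq
  have hmul : ∀ m : ℕ, IsSquare (-(m * d)) := by
    intro m
    induction m with
    | zero => simp
    | succ m ih =>
      obtain ⟨y, hy⟩ := ih
      convert hsq y using 1
      push_cast
      rw [sq, ← hy]; ring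
  have hall : ∀ c : ZMod p, IsSquare c := fun c => by
    simpa [ZMod.natCast_zmod_val, hd] using hmul (-c / d).val
  obtain ⟨c, hc⟩ := FiniteField.exists_nonsquare (F := ZMod p) (by rwa [ZMod.ringChar_zmod_n])
  exact hc (hall c)

theorem exists_nonsquare_norm_of_split_or_inert_general (t n : ℤ)
    (p : ℕ) (hp : p.Prime) (hodd : Odd p) (k : ℕ) (hm : 2 < p ^ k)
    (hsplit_or_inert :
      (∃ x : ZMod p, x ≠ 0 ∧ x ^ 2 = ((t ^ 2 - 4 * n : ℤ) : ZMod p)) ∨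
      ¬ IsSquare ((t ^ 2 - 4 * n : ℤ) : ZMod p)) :
    ∃ a b : ℤ, ¬ IsSquare ((nrm t n a b : ℤ) : ZMod (p ^ k)) := by
  have : Fact p.Prime := ⟨hp⟩
  have hΔ : ((t ^ 2 - 4 * n : ℤ) : ZMod p) ≠ 0 := by
    rintro h0
    rcases hsplit_or_inert with ⟨x, hx, hx2⟩ | hns
    · exact hx (pow_eq_zero_iff two_ne_zero |>.mp (hx2.trans h0))
    · exact hns (h0 ▸ IsSquare.zero)
  have hp2 : p ≠ 2 := by rintro rfl; exact absurd hodd (by decide)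
  have hk : k ≠ 0 := by rintro rfl; simp at hm
  obtain ⟨x, hx⟩ := ZMod.exists_not_isSquare_sq_sub hp2 hΔ
  obtain ⟨a, rfl⟩ := ZMod.intCast_surjective x
  refine ⟨a - t, 2, fun hsq => hx ?_⟩
  simpa [nrm_sub_two] using ZMod.isSquare_intCast_of_dvd (dvd_pow_self p hk) hsq

theorem exists_nonsquare_norm_of_split_or_inert (t n : ℤ) (himag : t ^ 2 - 4 * n < 0)
    (p : ℕ) (hp : p.Prime) (hodd : Odd p) (k : ℕ) (hm : 2 < p ^ k)
    (hsplit_or_inert :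
      (∃ x : ZMod p, x ≠ 0 ∧ x ^ 2 = ((t ^ 2 - 4 * n : ℤ) : ZMod p)) ∨
      ¬ IsSquare ((t ^ 2 - 4 * n : ℤ) : ZMod p)) :
    ∃ a b : ℤ, ¬ IsSquare ((nrm t n a b : ℤ) : ZMod (p ^ k)) :=
  exists_nonsquare_norm_of_split_or_inert_general t n p hp hodd k hm hsplit_or_inert
end

section
/- Let O ⊆ O' be orders in an imaginary quadratic field with index f = [O' : O], and let α ∈ O have norm N(α) coprime to f. Then the natural map O/αO → O'/αO' is an isomorphism of O-modules. -/
/-!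
We model `O' = ℤ[σ]` where `σ` is a root of `X² - tX + n` (an imaginary quadratic order
since `t² - 4n < 0`), and `O = ℤ[fσ]` is the suborder of index `f`, realized as the
subring of `O'` generated by `f·σ`.  An element `α = a + (f·b)·σ ∈ O` has norm
`N(α) = a² + t·a·(f·b) + n·(f·b)²`.  The natural map is induced by the inclusion
`O ↪ O'`; we assert it descends to an isomorphism `O/αO ≃ O'/αO'` (a ring isomorphism
commuting with the quotient maps, hence in particular an `O`-module isomorphism).

Let `S ⊆ R` be rings and `c ∈ S` with `c R ⊆ S`.  If `u α + v c = 1` with `u, v ∈ S`,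
then every `x ∈ R` is `u α x + v c x ∈ α R + S`, and `α w ∈ S` forces
`w = u (α w) + v (c w) ∈ S`; so `S/αS → R/αR` is bijective.  Here `R = O'`, `S = O`,
`c = f`, and `α` is coprime to `f` in `O` because `α ᾱ = N(α)` with
`ᾱ = (a + t f b) - f b σ ∈ O`.
-/

open Polynomial

/-- The imaginary quadratic order `O' = ℤ[σ]`, `σ` a root of `X² - tX + n`. -/
abbrev Oord (t n : ℤ) := AdjoinRoot (X ^ 2 - C t * X + C n : ℤ[X])

/-- The generator `σ` of the order. -/
noncomputable def sig (t n : ℤ) : Oord t n := AdjoinRoot.root _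

namespace Subring

variable {R : Type*} [CommRing R] {S : Subring R} {c α : S}

theorem comap_subtype_span_singleton (hc : ∀ x : R, (c : R) * x ∈ S) (hα : IsCoprime α c) :
    (Ideal.span {(α : R)}).comap S.subtype = Ideal.span {α} := by
  refine le_antisymm (fun s hs => ?_) (Ideal.span_le.mpr ?_)
  · obtain ⟨u, v, huv⟩ := hα
    obtain ⟨w, hw⟩ := Ideal.mem_span_singleton'.mp hs
    have hwS : w ∈ S := by
      have : w = (u * s : S) + (v : R) * (c * w) := by
        have := congrArg (fun z : S => (z : R) * w) huv
        simp only [coe_add, coe_mul, coe_one, one_mul] at this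
        rw [Subring.coe_subtype] at hw
        simp only [coe_mul]
        linear_combination -this + (u : R) * hw
      rw [this]
      exact add_mem (SetLike.coe_mem _) (mul_mem (SetLike.coe_mem v) (hc w))
    refine Ideal.mem_span_singleton'.mpr ⟨⟨w, hwS⟩, Subtype.ext ?_⟩
    simpa [mul_comm] using hw
  · exact Set.singleton_subset_iff.mpr (Ideal.mem_span_singleton_self (α : R))

theorem exists_sub_mem_span_singleton (hc : ∀ x : R, (c : R) * x ∈ S) (hα : IsCoprime α c)
    (x : R) : ∃ s : S, x - s ∈ Ideal.span {(α : R)} := by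
  obtain ⟨u, v, huv⟩ := hα
  refine ⟨⟨v * (c * x), mul_mem (SetLike.coe_mem v) (hc x)⟩,
    Ideal.mem_span_singleton'.mpr ⟨u * x, ?_⟩⟩
  have := congrArg (fun z : S => (z : R) * x) huv
  simp only [coe_add, coe_mul, coe_one, one_mul] at this
  linear_combination this

noncomputable def quotientSpanSingletonEquiv (hc : ∀ x : R, (c : R) * x ∈ S)
    (hα : IsCoprime α c) : S ⧸ Ideal.span {α} ≃+* R ⧸ Ideal.span {(α : R)} :=
  RingEquiv.ofBijective (Ideal.quotientMap _ S.subtype (comap_subtype_span_singleton hc hα).ge)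
    ⟨Ideal.quotientMap_injective' (comap_subtype_span_singleton hc hα).le, fun q => by
      obtain ⟨x, rfl⟩ := Ideal.Quotient.mk_surjective q
      obtain ⟨s, hs⟩ := exists_sub_mem_span_singleton hc hα x
      exact ⟨Ideal.Quotient.mk _ s, (Ideal.Quotient.mk_eq_mk_iff_sub_mem _ _).mpr
        (by simpa using neg_mem hs)⟩⟩

theorem quotientSpanSingletonEquiv_mk (hc : ∀ x : R, (c : R) * x ∈ S) (hα : IsCoprime α c)
    (s : S) :
    quotientSpanSingletonEquiv hc hα (Ideal.Quotient.mk _ s) = Ideal.Quotient.mk _ (s : R) :=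
  rfl

end Subring

theorem monic_X_sq_sub_C_mul_X_add_C (t n : ℤ) : (X ^ 2 - C t * X + C n : ℤ[X]).Monic := by
  monicity!

section QuadraticOrder

variable {t n : ℤ}

theorem sig_sq : sig t n ^ 2 = t * sig t n - n := by
  have h : sig t n ^ 2 - t * sig t n + n = 0 := by
    have hroot := AdjoinRoot.mk_self (f := (X ^ 2 - C t * X + C n : ℤ[X]))
    simpa [sig, map_add, map_sub, map_mul, map_pow] using hroot
  linear_combination h

theorem exists_eq_intCast_add_intCast_mul_sig (x : Oord t n) :
    ∃ c d : ℤ, x = c + d * sig t n := by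
  obtain ⟨p, rfl⟩ := AdjoinRoot.mk_surjective x
  have h2 : (X ^ 2 - C t * X + C n : ℤ[X]).natDegree = 2 := by compute_degree!
  have hdeg : (p %ₘ (X ^ 2 - C t * X + C n)).natDegree ≤ 1 := by
    have := natDegree_modByMonic_lt p (monic_X_sq_sub_C_mul_X_add_C t n)
      (by rintro h; rw [h] at h2; simp at h2)
    omega
  obtain ⟨d, c, hpd⟩ := exists_eq_X_add_C_of_natDegree_le_one hdeg
  refine ⟨c, d, ?_⟩
  rw [← AdjoinRoot.mk_leftInverse (monic_X_sq_sub_C_mul_X_add_C t n) (AdjoinRoot.mk _ p),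
    AdjoinRoot.modByMonicHom_mk, hpd]
  simp [sig, add_comm]

theorem intCast_add_mul_sig_mem (f c d : ℤ) :
    (c : Oord t n) + (f * d : ℤ) * sig t n ∈ Subring.closure {(f : Oord t n) * sig t n} := by
  have : ((f * d : ℤ) : Oord t n) * sig t n = d • ((f : Oord t n) * sig t n) := by
    rw [zsmul_eq_mul]; push_cast; ring
  rw [this]
  exact add_mem (intCast_mem _ c) (zsmul_mem (Subring.subset_closure (Set.mem_singleton _)) d)

theorem intCast_mul_mem_closure (f : ℤ) (x : Oord t n) :
    (f : Oord t n) * x ∈ Subring.closure {(f : Oord t n) * sig t n} := by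
  obtain ⟨c, d, rfl⟩ := exists_eq_intCast_add_intCast_mul_sig x
  have : (f : Oord t n) * (c + d * sig t n) = (f * c : ℤ) + (f * d : ℤ) * sig t n := by
    push_cast; ring
  rw [this]
  exact intCast_add_mul_sig_mem f _ d

theorem isCoprime_intCast_of_isCoprime_norm {f a b : ℤ}
    {α : Subring.closure ({(f : Oord t n) * sig t n} : Set (Oord t n))}
    (hα : (α : Oord t n) = (a : Oord t n) + (f * b : ℤ) * sig t n)
    (hcop : IsCoprime (a ^ 2 + t * a * (f * b) + n * (f * b) ^ 2) f) :
    IsCoprime α (f : Subring.closure ({(f : Oord t n) * sig t n} : Set (Oord t n))) := by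
  set N := a ^ 2 + t * a * (f * b) + n * (f * b) ^ 2
  let conj : Subring.closure ({(f : Oord t n) * sig t n} : Set (Oord t n)) :=
    ⟨(a + t * (f * b) : ℤ) + (f * -b : ℤ) * sig t n, intCast_add_mul_sig_mem _ _ _⟩
  have hnorm : α * conj = N := Subtype.ext <| by
    simp only [Subring.coe_mul, Subring.coe_intCast, hα, conj, N]
    push_cast
    linear_combination (-(f * b) ^ 2 : Oord t n) * sig_sq
  have hcopS : IsCoprime (N : Subring.closure ({(f : Oord t n) * sig t n} : Set (Oord t n))) f :=
    hcop.intCast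
  rw [← hnorm] at hcopS
  exact hcopS.of_mul_left_left

end QuadraticOrder

theorem quotient_iso_of_norm_coprime_index_general (t n : ℤ)
    (f : ℤ) (a b : ℤ)
    (hcop : IsCoprime (a ^ 2 + t * a * (f * b) + n * (f * b) ^ 2) f)
    (α : Subring.closure ({(f : Oord t n) * sig t n} : Set (Oord t n)))
    (hα : (α : Oord t n) = (a : Oord t n) + (f * b : ℤ) * sig t n) :
    ∃ e : (Subring.closure ({(f : Oord t n) * sig t n} : Set (Oord t n)) ⧸
            Ideal.span {α}) ≃+*
          (Oord t n ⧸ Ideal.span {(α : Oord t n)}),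
      ∀ x : Subring.closure ({(f : Oord t n) * sig t n} : Set (Oord t n)),
        e (Ideal.Quotient.mk (Ideal.span {α}) x) =
          Ideal.Quotient.mk (Ideal.span {(α : Oord t n)}) (x : Oord t n) :=
  ⟨Subring.quotientSpanSingletonEquiv (intCast_mul_mem_closure f)
      (isCoprime_intCast_of_isCoprime_norm hα hcop),
    Subring.quotientSpanSingletonEquiv_mk _ _⟩

theorem quotient_iso_of_norm_coprime_index (t n : ℤ) (himag : t ^ 2 - 4 * n < 0)
    (f : ℤ) (hf : 0 < f) (a b : ℤ)
    (hcop : IsCoprime (a ^ 2 + t * a * (f * b) + n * (f * b) ^ 2) f)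
    (α : Subring.closure ({(f : Oord t n) * sig t n} : Set (Oord t n)))
    (hα : (α : Oord t n) = (a : Oord t n) + (f * b : ℤ) * sig t n)
    (hα0 : (α : Oord t n) ≠ 0) :
    ∃ e : (Subring.closure ({(f : Oord t n) * sig t n} : Set (Oord t n)) ⧸
            Ideal.span {α}) ≃+*
          (Oord t n ⧸ Ideal.span {(α : Oord t n)}),
      ∀ x : Subring.closure ({(f : Oord t n) * sig t n} : Set (Oord t n)),
        e (Ideal.Quotient.mk (Ideal.span {α}) x) =
          Ideal.Quotient.mk (Ideal.span {(α : Oord t n)}) (x : Oord t n) :=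
  quotient_iso_of_norm_coprime_index_general t n f a b hcop α hα
end

section
/- Let O = Z[τ] be an imaginary quadratic order and m ≥ 1. The proportion of elements of O/mO that generate O/mO as an O-module is at least (φ(m)/m)^2, where φ is Euler's totient function. -/
/-!
If `a² + tab + nb²` is a unit mod `m`, then `a + bτ` is a unit of `O/mO`, since multiplying it by
`a + b(t - τ)` gives exactly this norm. As `(a, b) ↦ a + bτ` identifies `(ℤ/m)²` with `O/mO`, it
suffices to show that at least `φ(m)²` pairs mod `m` have unit norm. By the Chinese remainder
theorem this count is multiplicative in `m`. Going from `p` to `p^k` multiplies it by `p^(2(k-1))`,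
because being a unit is detected mod `p`. Over `𝔽_p` the norm has at most `2p - 1` zeros: for
`b ≠ 0` there are at most two roots `a`, and for `b = 0` only `a = 0`. That leaves `(p - 1)²`.
-/

open Polynomial

open Finset

theorem AddMonoidHom.card_preimage_of_surjective {G H : Type*} [AddGroup G] [AddGroup H]
    (F : G →+ H) (hF : Function.Surjective F) (T : Set H) :
    Nat.card (F ⁻¹' T) = Nat.card T * Nat.card F.ker := by
  let s := Function.surjInv hF
  have hs : ∀ y, F (s y) = y := Function.surjInv_eq hF
  have hker : ∀ k : F.ker, F k = 0 := fun k => F.mem_ker.mp k.2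
  rw [← Nat.card_prod]
  refine Nat.card_congr
    { toFun := fun x => (⟨F x, x.2⟩, ⟨-s (F x) + x, by simp [hs]⟩)
      invFun := fun yk => ⟨s yk.1 + yk.2, by simp [hs, hker]⟩
      left_inv := fun x => by simp
      right_inv := fun yk => by ext <;> simp [hs, hker] }

section BinaryNorm

variable {R S : Type*} [CommRing R] [CommRing S] (t n : ℤ)

/-- The norm of `a + bτ`, where `τ² = tτ - n`. -/
def binaryNorm (x : R × R) : R := x.1 ^ 2 + t * x.1 * x.2 + n * x.2 ^ 2

theorem map_binaryNorm (f : R →+* S) (x : R × R) :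
    f (binaryNorm t n x) = binaryNorm t n (Prod.map f f x) := by
  simp [binaryNorm]

def unitNormPairs (R : Type*) [CommRing R] (t n : ℤ) : Set (R × R) :=
  {x | IsUnit (binaryNorm t n x)}

theorem card_unitNormPairs_congr (e : R ≃+* S) :
    Nat.card (unitNormPairs R t n) = Nat.card (unitNormPairs S t n) :=
  Nat.card_congr <| (e.toEquiv.prodCongr e.toEquiv).subtypeEquiv fun x => by
    change IsUnit _ ↔ IsUnit (binaryNorm t n (Prod.map (e : R →+* S) (e : R →+* S) x))
    rw [← map_binaryNorm]
    exact (isUnit_map_iff (e : R →+* S) _).symm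

theorem card_unitNormPairs_prod :
    Nat.card (unitNormPairs (R × S) t n) =
      Nat.card (unitNormPairs R t n) * Nat.card (unitNormPairs S t n) := by
  rw [← Nat.card_prod, ← Nat.card_congr (Equiv.Set.prod _ _)]
  refine Nat.card_congr <| (Equiv.prodProdProdComm R S R S).subtypeEquiv fun x => ?_
  simp [unitNormPairs, binaryNorm, Prod.isUnit_iff]

theorem card_unitNormPairs_mul_of_surjective (f : R →+* S) (hf : Function.Surjective f)
    (hunit : ∀ x, IsUnit (f x) → IsUnit x) :
    Nat.card (unitNormPairs R t n) * Nat.card S ^ 2 =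
      Nat.card R ^ 2 * Nat.card (unitNormPairs S t n) := by
  let F := (f : R →+ S).prodMap (f : R →+ S)
  have hF : Function.Surjective F := Prod.map_surjective.mpr ⟨hf, hf⟩
  have hpre : unitNormPairs R t n = F ⁻¹' unitNormPairs S t n := by
    ext x
    change IsUnit _ ↔ IsUnit (binaryNorm t n (Prod.map f f x))
    rw [← map_binaryNorm]
    exact ⟨fun h => h.map f, hunit _⟩
  have hcard := AddMonoidHom.card_preimage_of_surjective F hF Set.univ
  rw [Set.preimage_univ, Nat.card_univ, Nat.card_univ, Nat.card_prod, Nat.card_prod] at hcard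
  rw [hpre, AddMonoidHom.card_preimage_of_surjective F hF, sq, sq, hcard]
  ring

end BinaryNorm

section FiniteField

variable {F : Type*} [Field F] [Fintype F] [DecidableEq F] (t n : ℤ)

/-- The extra `1` at `b = 0` records that this fiber is only `{0}`; summed over `b`, the bound
gives at most `2q - 1` zeros of the norm. -/
theorem card_binaryNorm_eq_zero_add_ite_le (b : F) :
    #{a | binaryNorm t n (a, b) = 0} + (if b = 0 then 1 else 0) ≤ 2 := by
  by_cases hb : b = 0
  · subst hb
    have : ({a | binaryNorm t n (a, (0 : F)) = 0} : Finset F) ⊆ {0} := by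
      intro a
      simp [binaryNorm]
    simpa using Finset.card_le_card this
  · let P : F[X] := X ^ 2 + C (t * b) * X + C (n * b ^ 2)
    have hP : P.natDegree = 2 := by simp only [P]; compute_degree!
    have hP0 : P ≠ 0 := fun h => by simp [h] at hP
    have hsub : ({a | binaryNorm t n (a, b) = 0} : Finset F) ⊆ P.roots.toFinset := by
      intro a ha
      simp only [Finset.mem_filter, Finset.mem_univ, true_and] at ha
      simp only [Multiset.mem_toFinset, mem_roots hP0, IsRoot.def, P]
      simp only [eval_add, eval_mul, eval_pow, eval_X, eval_C]
      rw [← ha, binaryNorm]; ring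
    calc _ = #{a | binaryNorm t n (a, b) = 0} := by simp [hb]
      _ ≤ P.roots.toFinset.card := Finset.card_le_card hsub
      _ ≤ Multiset.card P.roots := Multiset.toFinset_card_le _
      _ ≤ 2 := hP ▸ P.card_roots'

theorem sq_card_sub_one_le_card_unitNormPairs :
    (Fintype.card F - 1) ^ 2 ≤ Nat.card (unitNormPairs F t n) := by
  have hzero : #{x : F × F | binaryNorm t n x = 0} + 1 ≤ 2 * Fintype.card F := by
    have := Finset.sum_le_sum (s := (univ : Finset F)) fun b _ =>
      card_binaryNorm_eq_zero_add_ite_le t n b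
    rw [Finset.sum_add_distrib, Finset.sum_ite_eq', if_pos (Finset.mem_univ _)] at this
    rw [Finset.card_filter, Fintype.sum_prod_type_right]
    simp only [Finset.card_filter] at this
    rwa [Finset.sum_const, Finset.card_univ, smul_eq_mul, mul_comm] at this
  have hsplit := Finset.card_filter_add_card_filter_not
    (s := (univ : Finset (F × F))) fun x => binaryNorm t n x = 0
  have hunits : Nat.card (unitNormPairs F t n) = #{x : F × F | ¬binaryNorm t n x = 0} := by
    simp only [unitNormPairs, isUnit_iff_ne_zero]
    rw [Nat.card_coe_set_eq, Set.ncard_eq_toFinset_card', Set.toFinset_ofPred]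
  rw [Finset.card_univ, Fintype.card_prod] at hsplit
  obtain ⟨q, hq⟩ : ∃ q, Fintype.card F = q + 1 :=
    Nat.exists_eq_add_one.mpr (Fintype.card_pos (α := F))
  rw [hq] at hsplit hzero ⊢
  rw [hunits, Nat.add_sub_cancel]
  nlinarith

end FiniteField

theorem ZMod.isUnit_of_isUnit_castHom_prime_pow {p k : ℕ} (hp : p.Prime) (hk : k ≠ 0)
    (x : ZMod (p ^ k)) (hx : IsUnit (ZMod.castHom (dvd_pow_self p hk) (ZMod p) x)) : IsUnit x := by
  have : NeZero (p ^ k) := ⟨pow_ne_zero _ hp.ne_zero⟩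
  rw [← ZMod.natCast_zmod_val x, map_natCast, ZMod.isUnit_iff_coprime] at hx
  rw [← ZMod.natCast_zmod_val x, ZMod.isUnit_iff_coprime]
  exact hx.pow_right k

theorem totient_sq_le_card_unitNormPairs (t n : ℤ) (m : ℕ) :
    m.totient ^ 2 ≤ Nat.card (unitNormPairs (ZMod m) t n) := by
  induction m using Nat.recOnPosPrimePosCoprime with
  | zero => simp
  | one =>
    have : Nonempty (unitNormPairs (ZMod 1) t n) := ⟨⟨0, isUnit_of_subsingleton _⟩⟩
    simp
  | prime_pow p k hp hk =>
    have : Fact p.Prime := ⟨hp⟩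
    have hfib := card_unitNormPairs_mul_of_surjective t n _ (ZMod.castHom_surjective _)
      (ZMod.isUnit_of_isUnit_castHom_prime_pow hp hk.ne')
    have hfield := sq_card_sub_one_le_card_unitNormPairs (F := ZMod p) t n
    rw [Nat.card_zmod, Nat.card_zmod] at hfib
    rw [ZMod.card] at hfield
    rw [Nat.totient_prime_pow hp hk]
    refine Nat.le_of_mul_le_mul_right ?_ (pow_pos hp.pos 2)
    calc (p ^ (k - 1) * (p - 1)) ^ 2 * p ^ 2 = (p ^ k) ^ 2 * (p - 1) ^ 2 := by
          rw [← pow_sub_one_mul hk.ne']; ring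
      _ ≤ (p ^ k) ^ 2 * Nat.card (unitNormPairs (ZMod p) t n) := Nat.mul_le_mul_left _ hfield
      _ = _ := hfib.symm
  | coprime a b ha hb hab iha ihb =>
    rw [Nat.totient_mul hab, card_unitNormPairs_congr t n (ZMod.chineseRemainder hab),
      card_unitNormPairs_prod, mul_pow]
    exact Nat.mul_le_mul iha ihb

theorem Submodule.span_singleton_eq_top_iff_isUnit_of_surjective {A R : Type*} [CommRing A]
    [CommRing R] [Algebra A R] (h : Function.Surjective (algebraMap A R)) (x : R) :
    Submodule.span A {x} = ⊤ ↔ IsUnit x := by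
  rw [← Submodule.restrictScalars_span A R h, Submodule.restrictScalars_eq_top_iff,
    ← Ideal.span, Ideal.span_singleton_eq_top]

namespace AdjoinRoot

noncomputable def quotSpanNatCastEquiv {f : ℤ[X]} {m : ℕ} {g : (ZMod m)[X]}
    (hfg : f.map (Int.castRingHom (ZMod m)) = g) :
    AdjoinRoot f ⧸ Ideal.span {(m : AdjoinRoot f)} ≃+* AdjoinRoot g :=
  (Ideal.quotEquivOfEq (by rw [Ideal.map_span, Set.image_singleton, map_natCast])).trans
    ((quotAdjoinRootEquivQuotPolynomialQuot (Ideal.span {(m : ℤ)}) f).trans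
      (mapRingEquiv (Int.quotientSpanNatEquivZMod m) _ g <| by
        rw [Polynomial.map_map, ← hfg, RingHom.ext_int (RingHom.comp _ _) (Int.castRingHom _)]))

theorem bijective_of_natDegree_eq_two {R : Type*} [CommRing R] {g : R[X]}
    (hg : g.Monic) (h2 : g.natDegree = 2) :
    Function.Bijective fun x : R × R => of g x.1 + of g x.2 * root g := by
  have hdim : (powerBasis' hg).dim = 2 := h2
  let b := (powerBasis' hg).basis.reindex (finCongr hdim)
  convert ((finTwoArrowEquiv R).symm.trans b.equivFun.symm.toEquiv).bijective using 1
  ext x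
  simp [b, Module.Basis.equivFun_symm_apply, Fin.sum_univ_two, Algebra.smul_def, mul_comm]

variable (R : Type*) [CommRing R] (t n : ℤ)

noncomputable def quadPoly : R[X] := X ^ 2 - C (t : R) * X + C (n : R)

theorem quadPoly_monic : (quadPoly R t n).Monic := by
  unfold quadPoly; monicity!

theorem bijective_quadPoly :
    Function.Bijective fun x : R × R => of (quadPoly R t n) x.1 + of _ x.2 * root _ := by
  rcases subsingleton_or_nontrivial R with hR | hR
  · have := (mk_surjective (g := quadPoly R t n)).subsingleton
    exact ⟨Function.injective_of_subsingleton _, fun y => ⟨0, Subsingleton.elim _ _⟩⟩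
  · exact bijective_of_natDegree_eq_two (quadPoly_monic R t n)
      (by unfold quadPoly; compute_degree!)

variable {R t n} in
theorem isUnit_of_isUnit_binaryNorm (x : R × R) (hx : IsUnit (binaryNorm t n x)) :
    IsUnit (of (quadPoly R t n) x.1 + of _ x.2 * root _) := by
  set g := quadPoly R t n
  have hroot : root g ^ 2 - t * root g + n = 0 := by
    have h : mk g (X ^ 2 - (t : R[X]) * X + (n : R[X])) = 0 := by
      rw [← mk_self (f := g)]
      simp [g, quadPoly]
    simpa using h
  have hconj : (of g x.1 + of g x.2 * root g) * (of g x.1 + of g x.2 * (t - root g)) =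
      of g (binaryNorm t n x) := by
    simp only [binaryNorm, map_add, map_mul, map_pow, map_intCast]
    linear_combination -(of g x.2) ^ 2 * hroot
  exact isUnit_of_mul_isUnit_left (hconj ▸ hx.map (of g))

end AdjoinRoot

theorem generator_proportion_general (t n : ℤ) (m : ℕ) :
    (Nat.totient m) ^ 2 * Nat.card (Oord t n ⧸ Ideal.span {(m : Oord t n)}) ≤
      m ^ 2 * Nat.card {x : Oord t n ⧸ Ideal.span {(m : Oord t n)} //
        Submodule.span (Oord t n) {x} = ⊤} := by
  obtain rfl | hm := m.eq_zero_or_pos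
  · simp
  have : NeZero m := ⟨hm.ne'⟩
  let g := AdjoinRoot.quadPoly (ZMod m) t n
  have E : Oord t n ⧸ Ideal.span {(m : Oord t n)} ≃+* AdjoinRoot g :=
    AdjoinRoot.quotSpanNatCastEquiv (by simp [g, AdjoinRoot.quadPoly])
  have hbij := AdjoinRoot.bijective_quadPoly (ZMod m) t n
  have : Finite (AdjoinRoot g) := Finite.of_surjective _ hbij.2
  have hcard : Nat.card (Oord t n ⧸ Ideal.span {(m : Oord t n)}) = m ^ 2 := by
    rw [Nat.card_congr E.toEquiv, ← Nat.card_congr (Equiv.ofBijective _ hbij), Nat.card_prod,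
      Nat.card_zmod, sq]
  have hgen : Nat.card {x : Oord t n ⧸ Ideal.span {(m : Oord t n)} //
      Submodule.span (Oord t n) {x} = ⊤} = Nat.card {s : AdjoinRoot g // IsUnit s} :=
    Nat.card_congr <| E.toEquiv.subtypeEquiv fun x => by
      rw [Submodule.span_singleton_eq_top_iff_isUnit_of_surjective Ideal.Quotient.mk_surjective]
      exact (isUnit_map_iff (E : _ →+* AdjoinRoot g) x).symm
  have hunits : Nat.card (unitNormPairs (ZMod m) t n) ≤ Nat.card {s : AdjoinRoot g // IsUnit s} :=
    Nat.card_le_card_of_injective (fun x => ⟨_, AdjoinRoot.isUnit_of_isUnit_binaryNorm x.1 x.2⟩)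
      fun x y hxy => Subtype.ext (hbij.1 (congrArg Subtype.val hxy))
  rw [hcard, hgen, mul_comm]
  exact Nat.mul_le_mul_left _ ((totient_sq_le_card_unitNormPairs t n m).trans hunits)

theorem generator_proportion (t n : ℤ) (himag : t ^ 2 - 4 * n < 0)
    (m : ℕ) (hm : 1 ≤ m) :
    (Nat.totient m) ^ 2 * Nat.card (Oord t n ⧸ Ideal.span {(m : Oord t n)}) ≤
      m ^ 2 * Nat.card {x : Oord t n ⧸ Ideal.span {(m : Oord t n)} //
        Submodule.span (Oord t n) {x} = ⊤} :=
  generator_proportion_general t n m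
end

section
/- Let O be an imaginary quadratic order of discriminant Δ and let m | Δ. Define m' = m/4 if 4 | m, m' = m/2 if m ≡ 2 (mod 4), and m' = m otherwise. Then there exists τ ∈ O such that Z[τ] ≡ O modulo m (i.e., O = Z[τ] + mO) and Tr(τ) ≡ N(τ) ≡ 0 (mod m'). -/
/-!
STATEMENT 7: Let `O` be the imaginary quadratic order of discriminant `Δ` and let
`m ∣ Δ`.  Define `m' = m/4` if `4 ∣ m`, `m' = m/2` if `m ≡ 2 (mod 4)`, and `m' = m`
otherwise.  Then there exists `τ ∈ O` such that `ℤ[τ] ≡ O` modulo `m`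
(i.e. `O = ℤ[τ] + mO`) and `Tr(τ) ≡ N(τ) ≡ 0 (mod m')`.

We model `O = ℤ[σ]` where `σ = (Δ + √Δ)/2` is a root of `X² - ΔX + (Δ² - Δ)/4`, which
has trace `Δ` and norm `(Δ² - Δ)/4`; `Δ < 0` and `Δ ≡ 0, 1 (mod 4)`.  An element
`τ = a + bσ` has `Tr(τ) = 2a + bΔ` and `N(τ) = a² + abΔ + b²(Δ² - Δ)/4`.
-/

open Polynomial

/-- The order of discriminant `Δ`: `ℤ[σ]` with `σ` a root of `X² - ΔX + (Δ² - Δ)/4`. -/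
abbrev OΔ (Δ : ℤ) := AdjoinRoot (X ^ 2 - C Δ * X + C ((Δ ^ 2 - Δ) / 4) : ℤ[X])

/-- The generator `σ = (Δ + √Δ)/2` of the order of discriminant `Δ`. -/
noncomputable def sigΔ (Δ : ℤ) : OΔ Δ := AdjoinRoot.root _

/-- `m' = m/4` if `4 ∣ m`; `m' = m/2` if `m ≡ 2 (mod 4)`; `m' = m` otherwise. -/
def mPrime (m : ℕ) : ℕ := if 4 ∣ m then m / 4 else if m % 4 = 2 then m / 2 else m

/-!
Every shift `τ = a + σ` already generates `O`, so only the trace and the norm matter; they are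
`2a + Δ` and `((2a + Δ)² - Δ)/4`. If `4 ∣ Δ`, take `a = -Δ/2`: the trace vanishes and the norm is
`-Δ/4`, and `m ∣ Δ` forces `m' ∣ Δ/4`. If `Δ` is odd, then so is `m = m'`, and `a = -Δ(m + 1)/2`
makes the trace `-mΔ` and the norm a multiple of `Δ`.
-/

theorem Subring.closure_singleton_intCast_add {R : Type*} [Ring R] (a : ℤ) (x : R) :
    Subring.closure {(a : R) + x} = Subring.closure {x} := by
  apply le_antisymm <;> rw [Subring.closure_le, Set.singleton_subset_iff, SetLike.mem_coe]
  · exact add_mem (intCast_mem _ a) (Subring.subset_closure rfl)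
  · have h : (a : R) + x ∈ Subring.closure {(a : R) + x} := Subring.subset_closure rfl
    simpa using sub_mem h (intCast_mem _ a)

theorem Subring.closure_eq_top_of_adjoin_int_eq_top {A : Type*} [Ring A] [Algebra ℤ A]
    {s : Set A} (h : Algebra.adjoin ℤ s = ⊤) : Subring.closure s = ⊤ := by
  have hs := congrArg Subalgebra.toSubring h
  rw [Algebra.adjoin_eq_ring_closure, Algebra.top_toSubring] at hs
  refine eq_top_iff.2 (hs ▸ Subring.closure_le.2 (Set.union_subset ?_ Subring.subset_closure))
  rintro _ ⟨n, rfl⟩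
  simp

theorem closure_intCast_add_sigΔ (Δ a : ℤ) :
    Subring.closure {(a : OΔ Δ) + sigΔ Δ} = ⊤ := by
  rw [Subring.closure_singleton_intCast_add]
  exact Subring.closure_eq_top_of_adjoin_int_eq_top AdjoinRoot.adjoinRoot_eq_top

theorem mPrime_dvd_of_dvd_four_mul {m : ℕ} {t : ℤ} (h : (m : ℤ) ∣ 4 * t) :
    (mPrime m : ℤ) ∣ t := by
  unfold mPrime
  split_ifs with h4 h2
  · obtain ⟨v, rfl⟩ := h4
    rw [Nat.mul_div_cancel_left v four_pos]
    push_cast at h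
    exact (mul_dvd_mul_iff_left four_ne_zero).1 h
  · obtain ⟨u, rfl, hu⟩ : ∃ u, m = 2 * u ∧ Odd u := ⟨m / 2, by omega, Nat.odd_iff.2 (by omega)⟩
    rw [Nat.mul_div_cancel_left u two_pos]
    push_cast at h
    rw [show (4 : ℤ) * t = 2 * (2 * t) by ring, mul_dvd_mul_iff_left two_ne_zero] at h
    exact (Int.isCoprime_two_right.2 (by exact_mod_cast hu)).dvd_of_dvd_mul_left h
  · have hodd : Odd (m : ℤ) := by exact_mod_cast Nat.odd_iff.2 (by omega)
    exact ((Int.isCoprime_two_right.2 hodd).pow_right (n := 2)).dvd_of_dvd_mul_left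
      (by simpa using h)

theorem mPrime_of_odd {m : ℕ} (hm : Odd m) : mPrime m = m := by
  have := Nat.odd_iff.1 hm
  simp only [mPrime]
  split_ifs <;> omega

theorem exists_shift_mPrime_dvd_trace_and_norm {Δ : ℤ} (hcong : Δ % 4 = 0 ∨ Δ % 4 = 1)
    {m : ℕ} (hdvd : (m : ℤ) ∣ Δ) :
    ∃ a : ℤ, (mPrime m : ℤ) ∣ 2 * a + Δ ∧
      (mPrime m : ℤ) ∣ a ^ 2 + a * Δ + (Δ ^ 2 - Δ) / 4 := by
  rcases hcong with h0 | h1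
  · obtain ⟨t, rfl⟩ : ∃ t, Δ = 4 * t := ⟨Δ / 4, by omega⟩
    have hc : ((4 * t) ^ 2 - 4 * t) / 4 = 4 * t ^ 2 - t := by
      rw [show (4 * t) ^ 2 - 4 * t = 4 * (4 * t ^ 2 - t) by ring,
        Int.mul_ediv_cancel_left _ four_ne_zero]
    refine ⟨-(2 * t), ⟨0, by ring⟩, ?_⟩
    rw [hc, show (-(2 * t)) ^ 2 + -(2 * t) * (4 * t) + (4 * t ^ 2 - t) = -t by ring]
    exact (mPrime_dvd_of_dvd_four_mul hdvd).neg_right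
  · obtain ⟨t, rfl⟩ : ∃ t, Δ = 4 * t + 1 := ⟨Δ / 4, by omega⟩
    have hc : ((4 * t + 1) ^ 2 - (4 * t + 1)) / 4 = (4 * t + 1) * t := by
      rw [show (4 * t + 1) ^ 2 - (4 * t + 1) = 4 * ((4 * t + 1) * t) by ring,
        Int.mul_ediv_cancel_left _ four_ne_zero]
    obtain ⟨u, rfl⟩ : Odd m :=
      (Int.natAbs_odd.2 (Int.odd_iff.2 (by omega))).of_dvd_nat (Int.natCast_dvd.1 hdvd)
    obtain ⟨k, hk⟩ := hdvd
    rw [mPrime_of_odd ⟨u, rfl⟩, hc]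
    refine ⟨-(4 * t + 1) * (u + 1), ⟨-(4 * t + 1), by push_cast; ring⟩, ?_⟩
    exact ⟨k * ((4 * t + 1) * (u + 1) * u + t), by rw [hk]; ring⟩

theorem exists_tau_trace_norm_zero_general (Δ : ℤ)
    (hcong : Δ % 4 = 0 ∨ Δ % 4 = 1)
    (m : ℕ) (hdvd : (m : ℤ) ∣ Δ) :
    ∃ a b : ℤ,
      -- ℤ[τ] ≡ O modulo m, i.e. O = ℤ[τ] + mO, where τ = a + bσ
      (∀ x : OΔ Δ, ∃ y ∈ Subring.closure ({(a : OΔ Δ) + b * sigΔ Δ} : Set (OΔ Δ)),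
        ∃ z : OΔ Δ, x = y + (m : OΔ Δ) * z) ∧
      -- Tr(τ) ≡ 0 (mod m')
      (mPrime m : ℤ) ∣ (2 * a + b * Δ) ∧
      -- N(τ) ≡ 0 (mod m')
      (mPrime m : ℤ) ∣ (a ^ 2 + a * b * Δ + b ^ 2 * ((Δ ^ 2 - Δ) / 4)) := by
  obtain ⟨a, htrace, hnorm⟩ := exists_shift_mPrime_dvd_trace_and_norm hcong hdvd
  refine ⟨a, 1, fun x => ⟨x, ?_, 0, by simp⟩, by simpa using htrace, by simpa using hnorm⟩
  simp [closure_intCast_add_sigΔ]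

theorem exists_tau_trace_norm_zero (Δ : ℤ) (hneg : Δ < 0)
    (hcong : Δ % 4 = 0 ∨ Δ % 4 = 1)
    (m : ℕ) (hm : 0 < m) (hdvd : (m : ℤ) ∣ Δ) :
    ∃ a b : ℤ,
      -- ℤ[τ] ≡ O modulo m, i.e. O = ℤ[τ] + mO, where τ = a + bσ
      (∀ x : OΔ Δ, ∃ y ∈ Subring.closure ({(a : OΔ Δ) + b * sigΔ Δ} : Set (OΔ Δ)),
        ∃ z : OΔ Δ, x = y + (m : OΔ Δ) * z) ∧
      -- Tr(τ) ≡ 0 (mod m')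
      (mPrime m : ℤ) ∣ (2 * a + b * Δ) ∧
      -- N(τ) ≡ 0 (mod m')
      (mPrime m : ℤ) ∣ (a ^ 2 + a * b * Δ + b ^ 2 * ((Δ ^ 2 - Δ) / 4)) :=
  exists_tau_trace_norm_zero_general Δ hcong m hdvd
end

section
/- Let O be an imaginary quadratic order of discriminant Δ_O and let m > 1 with gcd(m, Δ_O) = 1. If m'' > 2 is an integer dividing m such that every value N(λ), λ ∈ O, is a square modulo m'', then this is a contradiction; hence any integer m'' dividing m such that every N(λ), λ ∈ O, is a square modulo m'' satisfies m'' ≤ 2. -/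
/-!
STATEMENT 14: Let `O = ℤ[τ]` be an imaginary quadratic order with discriminant
`Δ = t² - 4n < 0`, and let `m` be coprime to `Δ`.  If `m''` is a divisor of `m` such
that every norm `N(λ)`, `λ ∈ O`, is a square modulo `m''`, then `m'' ≤ 2`
(equivalently: `m'' > 2` yields a contradiction).  Here `N(a + bτ) = a² + t·a·b + n·b²`.
-/

open Polynomial in
lemma form_represents (p : ℕ) [hp : Fact p.Prime] (hp2 : p ≠ 2) (t n : ℤ)
    (hΔ : ((t ^ 2 - 4 * n : ℤ) : ZMod p) ≠ 0) (c : ZMod p) :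
    ∃ a b : ZMod p, a ^ 2 + (t : ZMod p) * a * b + (n : ZMod p) * b ^ 2 = c := by
  set Δ : ZMod p := ((t ^ 2 - 4 * n : ℤ) : ZMod p) with hΔdef
  have hodd : p % 2 = 1 := hp.1.eq_two_or_odd.resolve_left hp2
  have h2 : (2 : ZMod p) ≠ 0 := by
    intro h
    have hd : p ∣ 2 := (ZMod.natCast_eq_zero_iff 2 p).mp (by exact_mod_cast h)
    exact hp2 ((Nat.prime_dvd_prime_iff_eq hp.1 Nat.prime_two).mp hd)
  obtain ⟨u, v, huv⟩ : ∃ u v, (X ^ 2 - C (4 * c)).eval u + ((C (-Δ)) * X ^ 2).eval v = 0 := by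
    apply FiniteField.exists_root_sum_quadratic
    · exact degree_X_pow_sub_C (by norm_num) _
    · rw [degree_C_mul_X_pow 2 (neg_ne_zero.mpr hΔ)]; rfl
    · rw [ZMod.card, hodd]
  simp only [eval_add, eval_sub, eval_pow, eval_X, eval_C, eval_mul] at huv
  set i : ZMod p := (2 : ZMod p)⁻¹ with hidef
  have hi : (2 : ZMod p) * i = 1 := mul_inv_cancel₀ h2
  refine ⟨i * (u - t * v), v, ?_⟩
  have hΔ' : Δ = (t : ZMod p) ^ 2 - 4 * (n : ZMod p) := by push_cast [hΔdef]; ring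
  have h4 : (4 : ZMod p) ≠ 0 := by
    have := mul_ne_zero h2 h2
    simpa [show (2 : ZMod p) * 2 = 4 by norm_num] using this
  apply mul_left_cancel₀ h4
  linear_combination huv + v ^ 2 * hΔ' + ((1 + 2 * i) * (u - t * v) ^ 2 + 2 * t * (u - t * v) * v) * hi

theorem le_two_of_norms_squares (t n : ℤ) (himag : t ^ 2 - 4 * n < 0)
    (m m'' : ℕ) (hdvd : m'' ∣ m)
    (hcop : IsCoprime (m : ℤ) (t ^ 2 - 4 * n))
    (hsq : ∀ a b : ℤ, IsSquare ((nrm t n a b : ℤ) : ZMod m'')) :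
    m'' ≤ 2 := by
  by_contra hle
  push_neg at hle
  by_cases h4 : 4 ∣ m''
  · -- `4 ∣ m''`: use `λ = 1 + 2τ`, whose norm is `1 + 2t + 4n ≡ 3 [MOD 4]` since `t` is odd.
    have h2m : (2 : ℤ) ∣ (m : ℤ) := by
      have : (4 : ℕ) ∣ m := h4.trans hdvd
      exact dvd_trans (by norm_num) (Int.natCast_dvd_natCast.mpr this)
    have hcop2 : IsCoprime (2 : ℤ) (t ^ 2 - 4 * n) :=
      IsCoprime.of_isCoprime_of_dvd_left hcop h2m
    have htodd : Odd t := by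
      rcases Int.even_or_odd t with he | ho
      · obtain ⟨k, hk⟩ := he
        exfalso
        have hdvd2 : (2 : ℤ) ∣ (t ^ 2 - 4 * n) := ⟨2 * k ^ 2 - 2 * n, by subst hk; ring⟩
        have := hcop2.isUnit_of_dvd' dvd_rfl hdvd2
        rw [Int.isUnit_iff] at this
        omega
      · exact ho
    obtain ⟨k, hk⟩ := htodd
    have hmap := (hsq 1 2).map (ZMod.castHom h4 (ZMod 4))
    rw [map_intCast] at hmap
    have h3 : ((nrm t n 1 2 : ℤ) : ZMod 4) = 3 := by
      have : nrm t n 1 2 = 3 + 4 * (k + n) := by simp [nrm, hk]; ring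
      rw [this]
      push_cast
      have h40 : (4 : ZMod 4) = 0 := by decide
      rw [h40]
      ring
    rw [h3] at hmap
    exact (by decide : ¬ IsSquare (3 : ZMod 4)) hmap
  · -- otherwise `m''` has an odd prime factor `p`.
    have hj : ∃ j : ℕ, j ≠ 1 ∧ ¬ 2 ∣ j ∧ j ∣ m'' := by
      by_cases h2 : 2 ∣ m''
      · obtain ⟨j, hjm⟩ := h2
        refine ⟨j, ?_, ?_, ⟨2, by omega⟩⟩
        · omega
        · intro ⟨l, hl⟩; exact h4 ⟨l, by omega⟩
      · exact ⟨m'', by omega, h2, dvd_rfl⟩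
    obtain ⟨j, hj1, hj2, hjm⟩ := hj
    set p := j.minFac with hpdef
    have hp : p.Prime := Nat.minFac_prime hj1
    haveI : Fact p.Prime := ⟨hp⟩
    have hpm'' : p ∣ m'' := (Nat.minFac_dvd j).trans hjm
    have hp2 : p ≠ 2 := by
      intro h
      exact hj2 (h ▸ Nat.minFac_dvd j)
    have hΔp : ((t ^ 2 - 4 * n : ℤ) : ZMod p) ≠ 0 := by
      intro h
      have hpd : (p : ℤ) ∣ (t ^ 2 - 4 * n) := (ZMod.intCast_zmod_eq_zero_iff_dvd _ _).mp h
      have hpm : (p : ℤ) ∣ (m : ℤ) := Int.natCast_dvd_natCast.mpr (hpm''.trans hdvd)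
      have := (IsCoprime.of_isCoprime_of_dvd_left hcop hpm).isUnit_of_dvd' dvd_rfl hpd
      rw [Int.isUnit_iff] at this
      have := hp.two_le
      omega
    obtain ⟨c, hc⟩ : ∃ c : ZMod p, ¬ IsSquare c := by
      apply FiniteField.exists_nonsquare
      rw [ZMod.ringChar_zmod_n]
      exact hp2
    obtain ⟨a, b, hab⟩ := form_represents p hp2 t n hΔp c
    obtain ⟨a', ha'⟩ := ZMod.intCast_surjective (n := p) a
    obtain ⟨b', hb'⟩ := ZMod.intCast_surjective (n := p) b
    have hmap := (hsq a' b').map (ZMod.castHom hpm'' (ZMod p))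
    rw [map_intCast] at hmap
    apply hc
    rw [← hab, ← ha', ← hb']
    have : ((nrm t n a' b' : ℤ) : ZMod p)
        = (a' : ZMod p) ^ 2 + (t : ZMod p) * a' * b' + (n : ZMod p) * (b' : ZMod p) ^ 2 := by
      push_cast [nrm]; ring
    rwa [this] at hmap
end

section
/- Let O = Z[τ] be an imaginary quadratic order and m ≥ 1. If M ≅ O/mO as O-modules, P ∈ M, and O·P ≅ Z/sZ × Z/mZ as abelian groups with s | m, then O·(s·P) = Z·(s·P). -/
/-!
STATEMENT 17: Let `O = ℤ[τ]` be an imaginary quadratic order, `m ≥ 1`, and `M` an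
`O`-module isomorphic to `O/mO` as an `O`-module.  Let `P ∈ M`, and suppose the
`O`-submodule `O·P` generated by `P` is isomorphic, as an abelian group, to
`ℤ/sℤ × ℤ/mℤ` with `s ∣ m`.  Then `O·(s·P) = ℤ·(s·P)`, i.e. the `O`-submodule generated
by `s·P` equals the cyclic subgroup generated by `s·P`.

We model `O = ℤ[τ]`, `τ` a root of `X² - tX + n` with `t² - 4n < 0`.
-/

open Polynomial

theorem orbit_of_smul_eq_zmultiples (t n : ℤ) (himag : t ^ 2 - 4 * n < 0)
    (m s : ℕ) (hm : 0 < m) (hs : 0 < s) (hsm : s ∣ m)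
    (M : Type) [AddCommGroup M] [Module (Oord t n) M]
    (e : M ≃ₗ[Oord t n] (Oord t n ⧸ Ideal.span {(m : Oord t n)}))
    (P : M)
    (horbit : Nonempty
      ((↥(Submodule.span (Oord t n) ({P} : Set M))) ≃+ (ZMod s × ZMod m))) :
    (Submodule.span (Oord t n) ({s • P} : Set M) : Set M) =
      (AddSubgroup.zmultiples (s • P) : Set M) := by
  classical
  obtain ⟨e'⟩ := horbit
  haveI : NeZero s := ⟨hs.ne'⟩
  haveI : NeZero m := ⟨hm.ne'⟩
  set O := Oord t n with hO
  set N := Submodule.span O ({P} : Set M) with hN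
  set G := (ZMod s × ZMod m) with hG
  have hPmem : P ∈ N := Submodule.mem_span_singleton_self P
  -- m kills G
  have hmG : ∀ g : G, m • g = 0 := by
    intro g
    have h1 : m • g.1 = 0 := by
      rw [nsmul_eq_mul, (ZMod.natCast_eq_zero_iff m s).mpr hsm, zero_mul]
    have h2 : m • g.2 = 0 := by
      rw [nsmul_eq_mul, ZMod.natCast_self, zero_mul]
    have : m • g = (m • g.1, m • g.2) := rfl
    rw [this, h1, h2]; rfl
  -- m • P = 0
  have hmP : m • P = 0 := by
    have h0 : m • (⟨P, hPmem⟩ : N) = 0 := e'.injective (by rw [map_nsmul, hmG, map_zero])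
    have := congrArg Subtype.val h0
    simpa using this
  -- addOrderOf P = m
  have hordP : addOrderOf P = m := by
    refine Nat.dvd_antisymm (addOrderOf_dvd_of_nsmul_eq_zero hmP) ?_
    set k := addOrderOf P with hk
    have hx : ∀ y : N, k • y = 0 := by
      intro y
      obtain ⟨a, ha⟩ := Submodule.mem_span_singleton.mp y.2
      have hv : k • (y : M) = 0 := by
        rw [← ha, smul_comm, addOrderOf_nsmul_eq_zero, smul_zero]
      exact Subtype.ext (by simpa using hv)
    have h1 : k • ((0, 1) : G) = 0 := by
      have := congrArg e' (hx (e'.symm (0, 1)))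
      rwa [map_nsmul, e'.apply_symm_apply, map_zero] at this
    have h2 : k • (1 : ZMod m) = 0 := congrArg Prod.snd h1
    have h3 : ((k : ℕ) : ZMod m) = 0 := by rwa [nsmul_eq_mul, mul_one] at h2
    exact (ZMod.natCast_eq_zero_iff k m).mp h3
  have hordsP : addOrderOf (s • P) = m / s := by
    rw [addOrderOf_nsmul' P hs.ne', hordP, Nat.gcd_eq_right hsm]
  -- range description
  set F : G → M := fun g => s • ((e'.symm g : N) : M) with hF
  have hrange : (Submodule.span O ({s • P} : Set M) : Set M) = Set.range F := by
    ext x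
    simp only [SetLike.mem_coe, Submodule.mem_span_singleton, Set.mem_range]
    constructor
    · rintro ⟨a, rfl⟩
      refine ⟨e' ⟨a • P, Submodule.smul_mem _ a hPmem⟩, ?_⟩
      simp only [hF, AddEquiv.symm_apply_apply]
      exact (smul_comm (s : ℕ) a P)
    · rintro ⟨g, rfl⟩
      obtain ⟨a, ha⟩ := Submodule.mem_span_singleton.mp (e'.symm g).2
      refine ⟨a, ?_⟩
      rw [smul_comm, ha]
  -- factor F through s-smul on G
  set σ : G → G := fun g => s • g with hσ
  set j : G → M := fun g => ((e'.symm g : N) : M) with hj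
  have hFcomp : F = j ∘ σ := by
    funext g
    simp only [hF, hj, hσ, Function.comp_apply, map_nsmul]
    rfl
  have hjinj : Function.Injective j := by
    intro a b hab
    exact e'.symm.injective (Subtype.ext hab)
  -- range of σ
  have hσrange : Set.range σ =
      ({0} : Set (ZMod s)) ×ˢ ((AddSubgroup.zmultiples ((s : ZMod m))) : Set (ZMod m)) := by
    have hσmap : σ = Prod.map (fun x : ZMod s => s • x) (fun x : ZMod m => s • x) := rfl
    rw [hσmap, Set.range_prodMap]
    congr 1
    · ext x
      simp only [Set.mem_range, Set.mem_singleton_iff]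
      constructor
      · rintro ⟨y, rfl⟩
        rw [nsmul_eq_mul, ZMod.natCast_self, zero_mul]
      · rintro rfl
        exact ⟨0, by rw [smul_zero]⟩
    · ext x
      simp only [Set.mem_range, SetLike.mem_coe, AddSubgroup.mem_zmultiples_iff]
      constructor
      · rintro ⟨y, rfl⟩
        obtain ⟨k, rfl⟩ := ZMod.intCast_surjective y
        exact ⟨k, by rw [zsmul_eq_mul, nsmul_eq_mul, mul_comm]⟩
      · rintro ⟨k, rfl⟩
        exact ⟨(k : ZMod m), by rw [zsmul_eq_mul, nsmul_eq_mul, mul_comm]⟩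
  have hσcard : (Set.range σ).ncard = m / s := by
    rw [hσrange, Set.singleton_prod]
    rw [Set.ncard_image_of_injective _ (Prod.mk_right_injective _)]
    rw [← Nat.card_coe_set_eq]
    rw [SetLike.coe_sort_coe, Nat.card_zmultiples, ZMod.addOrderOf_coe s hm.ne',
      Nat.gcd_eq_right hsm]
  have hcardspan : (Submodule.span O ({s • P} : Set M) : Set M).ncard = m / s := by
    rw [hrange, hFcomp, Set.range_comp, Set.ncard_image_of_injective _ hjinj, hσcard]
  have hcardz : ((AddSubgroup.zmultiples (s • P) : AddSubgroup M) : Set M).ncard = m / s := by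
    rw [← Nat.card_coe_set_eq, SetLike.coe_sort_coe, Nat.card_zmultiples, hordsP]
  have hsub : ((AddSubgroup.zmultiples (s • P) : AddSubgroup M) : Set M) ⊆
      (Submodule.span O ({s • P} : Set M) : Set M) := by
    intro x hx
    obtain ⟨k, rfl⟩ := AddSubgroup.mem_zmultiples_iff.mp hx
    exact zsmul_mem (Submodule.mem_span_singleton_self _) k
  have hfin : (Submodule.span O ({s • P} : Set M) : Set M).Finite := by
    rw [hrange]; exact Set.finite_range F
  exact (Set.eq_of_subset_of_ncard_le hsub (by rw [hcardspan, hcardz]) hfin).symm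
end
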